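/- arXiv:2207.14790 — 3 statements merged into one kernel-verified Lean document; each statement's English description precedes it below -/
import Mathlib

section
/- Let \iota, a_0, a_1, a_2 be positive integers and let G be the 3×3 matrix with diagonal entries \iota - a_0, \iota - a_1, \iota - a_2 and all off-diagonal entries equal to \iota. Then G has rank at least two, and G has rank exactly two if and only if 1/\iota = 1/a_0 + 1/a_1 + 1/a_2. -/
/-!
`G = ι • 𝟙𝟙ᵀ - diag(a₀, a₁, a₂)` is a rank-one perturbation of an invertible diagonal matrix,
so its rank is at least `3 - 1 = 2`, and it is exactly `2` iff `G` is singular. By the matrix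
determinant lemma, `det G = -a₀a₁a₂ (1 - ι (1/a₀ + 1/a₁ + 1/a₂))`, which vanishes exactly when
`1/ι = 1/a₀ + 1/a₁ + 1/a₂`.
-/

namespace Matrix

variable {m n K : Type*} [Fintype n] [Field K]

theorem rank_add_le (A B : Matrix m n K) : (A + B).rank ≤ A.rank + B.rank := by
  rw [rank, rank, rank, mulVecLin_add]
  exact (Submodule.finrank_mono (LinearMap.range_add_le _ _)).trans
    (Submodule.finrank_add_le_finrank_add_finrank _ _)

variable [DecidableEq n]

theorem card_sub_one_le_rank_add_vecMulVec {A : Matrix n n K} (hA : A.det ≠ 0) (u v : n → K) :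
    Fintype.card n - 1 ≤ (A + vecMulVec u v).rank := by
  have : Fintype.card n ≤ (A + vecMulVec u v).rank + 1 :=
    calc Fintype.card n = (A + vecMulVec u v + vecMulVec (-u) v).rank := by
          rw [neg_vecMulVec, add_neg_cancel_right, rank_of_det_ne_zero hA]
      _ ≤ (A + vecMulVec u v).rank + (vecMulVec (-u) v).rank := rank_add_le _ _
      _ ≤ (A + vecMulVec u v).rank + 1 := by grw [rank_vecMulVec_le]
  omega

theorem rank_lt_card_of_det_eq_zero {A : Matrix n n K} (hA : A.det = 0) :
    A.rank < Fintype.card n := by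
  obtain ⟨v, hv, hAv⟩ := exists_mulVec_eq_zero_iff.2 hA
  have hker : 0 < Module.finrank K (LinearMap.ker A.mulVecLin) :=
    Module.finrank_pos_iff_exists_ne_zero.2 ⟨⟨v, hAv⟩, by simpa [Subtype.ext_iff] using hv⟩
  have := A.mulVecLin.finrank_range_add_finrank_ker
  rw [Module.finrank_fintype_fun_eq_card] at this
  rw [rank]
  omega

theorem rank_eq_card_sub_one_iff_det_eq_zero [Nonempty n] {A : Matrix n n K}
    (hA : Fintype.card n - 1 ≤ A.rank) : A.rank = Fintype.card n - 1 ↔ A.det = 0 := by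
  refine ⟨fun h => ?_, fun h => ?_⟩
  · by_contra hdet
    have := Fintype.card_pos (α := n)
    rw [rank_of_det_ne_zero hdet] at h
    omega
  · have := rank_lt_card_of_det_eq_zero h
    omega

theorem det_diagonal_add_vecMulVec {d : n → K} (hd : ∀ i, d i ≠ 0) (u v : n → K) :
    (diagonal d + vecMulVec u v).det = (∏ i, d i) * (1 + ∑ i, u i / d i * v i) := by
  have : diagonal d + vecMulVec u v =
      diagonal d * (1 + replicateCol Unit (u / d) * replicateRow Unit v) := by
    rw [Matrix.mul_add, Matrix.mul_one, ← vecMulVec_eq]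
    ext i j
    simp [diagonal_mul, vecMulVec_apply, ← mul_assoc, mul_div_cancel₀ _ (hd i)]
  rw [this, det_mul, det_diagonal, det_one_add_replicateCol_mul_replicateRow, dotProduct]
  simp only [Pi.div_apply, mul_comm (v _)]

end Matrix

theorem stmt_0_general (ι a₀ a₁ a₂ : ℕ) (h₀ : 0 < a₀) (h₁ : 0 < a₁) (h₂ : 0 < a₂)
    (G : Matrix (Fin 3) (Fin 3) ℚ)
    (hG : G = !![(ι : ℚ) - a₀, ι, ι; ι, (ι : ℚ) - a₁, ι; ι, ι, (ι : ℚ) - a₂]) :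
    2 ≤ G.rank ∧
      (G.rank = 2 ↔ (1 : ℚ) / ι = 1 / a₀ + 1 / a₁ + 1 / a₂) := by
  set a : Fin 3 → ℚ := ![(a₀ : ℚ), a₁, a₂]
  have ha : ∀ i, (-a) i ≠ 0 := by
    intro i; fin_cases i <;> simp [a] <;> omega
  have hprod : ∏ i, (-a) i ≠ 0 := Finset.prod_ne_zero_iff.2 fun i _ => ha i
  have hG' : G = Matrix.diagonal (-a) + Matrix.vecMulVec (fun _ => (ι : ℚ)) (fun _ => 1) := by
    subst hG; ext i j; fin_cases i <;> fin_cases j <;> simp [a, Matrix.vecMulVec_apply] <;> ring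
  have hrank : Fintype.card (Fin 3) - 1 ≤ G.rank := by
    rw [hG']
    exact Matrix.card_sub_one_le_rank_add_vecMulVec (by rwa [Matrix.det_diagonal]) _ _
  have hdet : G.det = 0 ↔ (1 : ℚ) / ι = 1 / a₀ + 1 / a₁ + 1 / a₂ := by
    rw [hG', Matrix.det_diagonal_add_vecMulVec ha, mul_eq_zero, or_iff_right hprod]
    have hs : (a₀ : ℚ)⁻¹ + (a₁ : ℚ)⁻¹ + (a₂ : ℚ)⁻¹ ≠ 0 := by positivity
    simp only [Fin.sum_univ_three, a, Pi.neg_apply, mul_one, Matrix.cons_val_zero,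
      Matrix.cons_val_one, Matrix.cons_val, one_div]
    rw [inv_eq_iff_eq_inv, ← mul_eq_one_iff_eq_inv₀ hs]
    constructor <;> intro h <;> linear_combination -h
  exact ⟨hrank, (Matrix.rank_eq_card_sub_one_iff_det_eq_zero hrank).trans hdet⟩

theorem stmt_0 (ι a₀ a₁ a₂ : ℕ) (hι : 0 < ι) (h₀ : 0 < a₀) (h₁ : 0 < a₁) (h₂ : 0 < a₂)
    (G : Matrix (Fin 3) (Fin 3) ℚ)
    (hG : G = !![(ι : ℚ) - a₀, ι, ι; ι, (ι : ℚ) - a₁, ι; ι, ι, (ι : ℚ) - a₂]) :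
    2 ≤ G.rank ∧
      (G.rank = 2 ↔ (1 : ℚ) / ι = 1 / a₀ + 1 / a₁ + 1 / a₂) :=
  stmt_0_general ι a₀ a₁ a₂ h₀ h₁ h₂ G hG
end

section
/- Let l_0, ..., l_r be positive integers, d_0, ..., d_r integers, set m_i = d_i/l_i and m = m_0 + ... + m_r, and assume m ≠ 0. Define \ell = 1/l_0 + ... + 1/l_r - r + 1 and for i = 1,...,r define u_i = (r-1)m_i + \sum_{j ≠ i}(m_j/l_i - m_i/l_j), and let u_B = (1/m)(u_1, ..., u_r, \ell) ∈ \mathbb{Q}^{r+1}. Let v_0 = (-l_0, ..., -l_0, d_0) and, for i = 1, ..., r, let v_i ∈ \mathbb{Q}^{r+1} be the vector with l_i in position i, d_i in the last position, and 0 elsewhere. Then ⟨u_B, v_0⟩ = 1 - (r-1)l_0 and ⟨u_B, v_i⟩ = 1 for all i = 1, ..., r. -/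
/-!
Each unscaled coordinate satisfies `u_i l_i + ℓ d_i = m` (after substituting `d_i = m_i l_i`
everything cancels), and the antisymmetric double sum in the `u_i` vanishes, so `∑_{i=0}^r u_i =
(r - 1) m`. The pairing with `v_i` is `(u_i l_i + ℓ d_i) / m = 1`; the pairing with `v_0` is
`(-l_0 (∑_{i≥1} u_i) + ℓ d_0) / m = (-l_0 ((r-1) m - u_0) + ℓ d_0) / m = 1 - (r - 1) l_0`.
-/

open Matrix Finset

theorem Fin.snoc_dotProduct_snoc {α : Type*} [NonUnitalNonAssocSemiring α] {n : ℕ}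
    (x y : Fin n → α) (a b : α) :
    (Fin.snoc x a : Fin (n + 1) → α) ⬝ᵥ Fin.snoc y b = x ⬝ᵥ y + a * b := by
  simp [dotProduct, Fin.sum_univ_castSucc]

theorem Finset.sum_sum_erase_sub_swap_eq_zero {ι M : Type*} [Fintype ι] [DecidableEq ι]
    [AddCommGroup M] (f : ι → ι → M) :
    ∑ i, ∑ j ∈ univ.erase i, (f i j - f j i) = 0 := by
  have h : ∀ i, ∑ j ∈ univ.erase i, (f i j - f j i) = ∑ j, (f i j - f j i) := fun i => by
    rw [← add_sum_erase _ _ (mem_univ i), sub_self, zero_add]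
  simp only [h, sum_sub_distrib]
  rw [sum_comm, sub_self]

section
variable {ι K : Type*} [Fintype ι] [DecidableEq ι] [Field K]

theorem sum_mul_add_sum_erase_div_sub_div (s : K) (m l : ι → K) :
    ∑ i, (s * m i + ∑ j ∈ univ.erase i, (m j / l i - m i / l j)) = s * ∑ i, m i := by
  rw [sum_add_distrib, ← mul_sum,
    sum_sum_erase_sub_swap_eq_zero (fun i j => m j / l i), add_zero]

theorem mul_add_sum_erase_div_sub_div_mul_add_eq_sum (s : K) (m l : ι → K) {i : ι}
    (hi : l i ≠ 0) :
    (s * m i + ∑ j ∈ univ.erase i, (m j / l i - m i / l j)) * l i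
      + ((∑ j, 1 / l j) - s) * (m i * l i) = ∑ j, m j := by
  rw [sum_sub_distrib, ← add_sum_erase _ m (mem_univ i),
    ← add_sum_erase _ (fun j => 1 / l j) (mem_univ i), ← sum_div]
  simp only [div_eq_mul_inv, one_mul, ← mul_sum]
  field_simp
  ring
end

open Matrix in
theorem stmt_9 (r : ℕ) (l d : Fin (r + 1) → ℤ) (hl : ∀ i, 0 < l i)
    (m : Fin (r + 1) → ℚ) (hm : ∀ i, m i = (d i : ℚ) / (l i : ℚ))
    (M : ℚ) (hM : M = ∑ i, m i) (hMne : M ≠ 0)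
    (ell : ℚ) (hell : ell = (∑ i, (1 : ℚ) / (l i : ℚ)) - r + 1)
    (uval : Fin (r + 1) → ℚ)
    (huval : ∀ i, uval i = ((r : ℚ) - 1) * m i +
      ∑ j ∈ Finset.univ.erase i, ((m j / (l i : ℚ)) - (m i / (l j : ℚ))))
    (uB : Fin (r + 1) → ℚ)
    (huB : ∀ k : Fin (r + 1), uB k =
      if h : (k : ℕ) < r then uval ⟨(k : ℕ) + 1, by omega⟩ / M else ell / M)
    (v : Fin (r + 1) → Fin (r + 1) → ℚ)
    (hv0 : ∀ k : Fin (r + 1), v 0 k = if (k : ℕ) = r then (d 0 : ℚ) else -(l 0 : ℚ))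
    (hvi : ∀ i : Fin (r + 1), i ≠ 0 → ∀ k : Fin (r + 1),
      v i k = if (k : ℕ) = (i : ℕ) - 1 then (l i : ℚ)
        else if (k : ℕ) = r then (d i : ℚ) else 0) :
    uB ⬝ᵥ v 0 = 1 - ((r : ℚ) - 1) * (l 0 : ℚ) ∧
      ∀ i : Fin (r + 1), i ≠ 0 → uB ⬝ᵥ v i = 1 := by
  have hl0 (i) : (l i : ℚ) ≠ 0 := by exact_mod_cast (hl i).ne'
  have hd (i) : (d i : ℚ) = m i * l i := by rw [hm, div_mul_cancel₀ _ (hl0 i)]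
  have key (i) : uval i * l i + ell * d i = M := by
    rw [huval, hell, hd, hM, sub_add,
      ← mul_add_sum_erase_div_sub_div_mul_add_eq_sum _ m (fun j => (l j : ℚ)) (hl0 i)]
  have hsum : ∑ k : Fin r, uval k.succ = (r - 1) * M - uval 0 := by
    rw [eq_sub_iff_add_eq', ← Fin.sum_univ_succ, hM, ← sum_mul_add_sum_erase_div_sub_div]
    exact sum_congr rfl fun i _ => huval i
  have huB' : uB = Fin.snoc (fun k : Fin r => uval k.succ / M) (ell / M) := by
    funext k
    induction k using Fin.lastCases with
    | last => simp [huB]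
    | cast k => simp [huB]; rfl
  have hv0' : v 0 = Fin.snoc (fun _ : Fin r => -(l 0 : ℚ)) (d 0) := by
    funext k
    induction k using Fin.lastCases with
    | last => simp [hv0]
    | cast k => simp [hv0, k.isLt.ne]
  have hvi' (j : Fin r) : v j.succ = Fin.snoc (Pi.single j (l j.succ : ℚ)) (d j.succ) := by
    funext k
    induction k using Fin.lastCases with
    | last => simp [hvi _ (Fin.succ_ne_zero j), j.isLt.ne']
    | cast k => simp [hvi _ (Fin.succ_ne_zero j), Pi.single_apply, Fin.ext_iff, k.isLt.ne]
  constructor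
  · rw [huB', hv0', Fin.snoc_dotProduct_snoc, dotProduct, ← sum_mul, ← sum_div, hsum]
    field_simp
    linear_combination key 0
  · intro i hi
    obtain ⟨j, rfl⟩ := Fin.exists_succ_eq.mpr hi
    rw [huB', hvi' j, Fin.snoc_dotProduct_snoc, dotProduct_single]
    field_simp
    linear_combination key j.succ
end

section
/- Let \iota^+, \iota^-, l_1, l_2, d_2, a be positive integers and b a negative integer with l_1, l_2 ≥ 2 and 0 < d_2 < l_2, and suppose l_2 divides a\iota^+ - l_1 d_2 and l_1 l_2 divides a\iota^+ - b\iota^-. Then the four columns of the matrix P = [[-1,-1,l_1,0],[-1,-1,0,l_2],[0, -(a\iota^+ - b\iota^-)/(l_1 l_2), (a\iota^+ - l_1 d_2)/l_2, d_2]] generate \mathbb{Q}^3 as a convex cone; in particular, l_1 l_2 v_{01} + l_2 v_1 + l_1 v_2 = a\iota^+ e_3 and l_1 l_2 v_{02} + l_2 v_1 + l_1 v_2 = b\iota^- e_3, where v_{01}, v_{02}, v_1, v_2 denote the columns of P and e_3 = (0,0,1). -/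
/-!
The two relations write `(a ι⁺) e₃` and `(b ι⁻) e₃` as nonnegative combinations of the
columns; since `a ι⁺ > 0 > b ι⁻`, both `e₃` and `-e₃` lie in the cone. Modulo this line, `v₁`
and `v₂` are positive multiples of `e₁` and `e₂`, and then `v₀₁ + e₂ = -e₁`, `v₀₁ + e₁ = -e₂`.
So the lineality space of the cone contains a basis, and the cone is everything.
-/

open Set

namespace PointedCone

section Ring

variable {R E : Type*} [Ring R] [LinearOrder R] [IsOrderedRing R] [AddCommGroup E] [Module R E]

lemma eq_top_of_basis_mem_lineal {ι : Type*} {C : PointedCone R E} (b : Module.Basis ι R E)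
    (h : ∀ i, b i ∈ C.lineal) : C = ⊤ := by
  have hlineal : C.lineal = ⊤ := by
    rw [eq_top_iff, ← b.span_eq]
    exact Submodule.span_le.mpr (range_subset_iff.mpr h)
  exact eq_top_iff.mpr fun x _ ↦ C.lineal_le (by simp [hlineal] : x ∈ C.lineal)

lemma mem_hull_range_iff {ι : Type*} [Fintype ι] {v : ι → E} {w : E} :
    w ∈ hull R (range v) ↔ ∃ c : ι → R, (∀ i, 0 ≤ c i) ∧ ∑ i, c i • v i = w := by
  rw [Submodule.mem_span_range_iff_exists_fun]
  constructor
  · rintro ⟨c, rfl⟩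
    exact ⟨fun i ↦ c i, fun i ↦ (c i).2, rfl⟩
  · rintro ⟨c, hc, rfl⟩
    exact ⟨fun i ↦ ⟨c i, hc i⟩, rfl⟩

end Ring

variable {𝕜 E : Type*} [Field 𝕜] [LinearOrder 𝕜] [IsStrictOrderedRing 𝕜]

lemma mem_lineal_of_smul_mem_of_smul_mem [AddCommGroup E] [Module 𝕜 E] {C : PointedCone 𝕜 E}
    {x : E} {α β : 𝕜} (hα : 0 < α) (hβ : β < 0) (hαx : α • x ∈ C) (hβx : β • x ∈ C) :
    x ∈ C.lineal := by
  refine ⟨?_, ?_⟩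
  · simpa [smul_smul, hα.ne'] using C.smul_mem (inv_nonneg.mpr hα.le) hαx
  · simpa [smul_smul, hβ.ne] using C.smul_mem (inv_nonneg.mpr (neg_nonneg.mpr hβ.le)) hβx

lemma eq_top_of_e₃_mem_lineal {C : PointedCone 𝕜 (Fin 3 → 𝕜)} {p q s t : 𝕜}
    (hp : 0 < p) (hq : 0 < q) (h₀ : ![-1, -1, 0] ∈ C) (h₁ : ![p, 0, s] ∈ C)
    (h₂ : ![0, q, t] ∈ C) (h₃ : ![0, 0, 1] ∈ C.lineal) : C = ⊤ := by
  have he₁ : ![1, 0, 0] ∈ C := by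
    have : ![1, 0, 0] = p⁻¹ • (![p, 0, s] + (-s) • ![0, 0, 1]) := by
      ext i; fin_cases i <;> simp [hp.ne']
    rw [this]
    exact C.smul_mem (inv_nonneg.mpr hp.le) (C.add_mem h₁ (C.lineal_le (C.lineal.smul_mem _ h₃)))
  have he₂ : ![0, 1, 0] ∈ C := by
    have : ![0, 1, 0] = q⁻¹ • (![0, q, t] + (-t) • ![0, 0, 1]) := by
      ext i; fin_cases i <;> simp [hq.ne']
    rw [this]
    exact C.smul_mem (inv_nonneg.mpr hq.le) (C.add_mem h₂ (C.lineal_le (C.lineal.smul_mem _ h₃)))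
  have hl₁ : ![1, 0, 0] ∈ C.lineal := by
    refine mem_lineal.mpr ⟨he₁, ?_⟩
    have : (-![1, 0, 0] : Fin 3 → 𝕜) = ![-1, -1, 0] + ![0, 1, 0] := by ext i; fin_cases i <;> simp
    rw [this]; exact C.add_mem h₀ he₂
  have hl₂ : ![0, 1, 0] ∈ C.lineal := by
    refine mem_lineal.mpr ⟨he₂, ?_⟩
    have : (-![0, 1, 0] : Fin 3 → 𝕜) = ![-1, -1, 0] + ![1, 0, 0] := by ext i; fin_cases i <;> simp
    rw [this]; exact C.add_mem h₀ he₁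
  refine eq_top_of_basis_mem_lineal (Pi.basisFun 𝕜 (Fin 3)) fun i ↦ ?_
  fin_cases i
  exacts [by convert hl₁ using 1; ext j; fin_cases j <;> simp,
    by convert hl₂ using 1; ext j; fin_cases j <;> simp,
    by convert h₃ using 1; ext j; fin_cases j <;> simp]

end PointedCone

section Relations

variable {K : Type*} [Field K]

lemma columns_relation_v₀₁ (l₁ l₂ d A : K) (hl₂ : l₂ ≠ 0) :
    (l₁ * l₂) • ![-1, -1, 0] + l₂ • ![l₁, 0, (A - l₁ * d) / l₂] + l₁ • ![0, l₂, d] =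
      A • ![0, 0, 1] := by
  ext i; fin_cases i <;> simp <;> field_simp <;> ring

lemma columns_relation_v₀₂ (l₁ l₂ d A B : K) (hl₁ : l₁ ≠ 0) (hl₂ : l₂ ≠ 0) :
    (l₁ * l₂) • ![-1, -1, -((A - B) / (l₁ * l₂))] + l₂ • ![l₁, 0, (A - l₁ * d) / l₂] +
      l₁ • ![0, l₂, d] = B • ![0, 0, 1] := by
  ext i; fin_cases i <;> simp <;> field_simp <;> ring

end Relations

theorem stmt_15_general (ιp ιm l₁ l₂ d₂ a b : ℤ)
    (hιp : 0 < ιp) (hιm : 0 < ιm) (ha : 0 < a) (hb : b < 0)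
    (hl₁ : 2 ≤ l₁) (hl₂ : 2 ≤ l₂)
    (v₀₁ v₀₂ v₁ v₂ : Fin 3 → ℚ)
    (hv₀₁ : v₀₁ = ![-1, -1, 0])
    (hv₀₂ : v₀₂ = ![-1, -1, -(((a : ℚ) * ιp - b * ιm) / (l₁ * l₂))])
    (hv₁ : v₁ = ![(l₁ : ℚ), 0, ((a : ℚ) * ιp - l₁ * d₂) / l₂])
    (hv₂ : v₂ = ![0, (l₂ : ℚ), (d₂ : ℚ)]) :
    (∀ w : Fin 3 → ℚ, ∃ c : Fin 4 → ℚ, (∀ i, 0 ≤ c i) ∧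
      w = c 0 • v₀₁ + c 1 • v₀₂ + c 2 • v₁ + c 3 • v₂) ∧
    ((l₁ * l₂ : ℚ) • v₀₁ + (l₂ : ℚ) • v₁ + (l₁ : ℚ) • v₂ = ((a : ℚ) * ιp) • ![0, 0, 1]) ∧
    ((l₁ * l₂ : ℚ) • v₀₂ + (l₂ : ℚ) • v₁ + (l₁ : ℚ) • v₂ = ((b : ℚ) * ιm) • ![0, 0, 1]) := by
  have hl₁' : (0 : ℚ) < l₁ := by exact_mod_cast (by omega : (0 : ℤ) < l₁)
  have hl₂' : (0 : ℚ) < l₂ := by exact_mod_cast (by omega : (0 : ℤ) < l₂)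
  have hrel₁ := hv₀₁ ▸ hv₁ ▸ hv₂ ▸ columns_relation_v₀₁ (l₁ : ℚ) l₂ d₂ (a * ιp) hl₂'.ne'
  have hrel₂ := hv₀₂ ▸ hv₁ ▸ hv₂ ▸
    columns_relation_v₀₂ (l₁ : ℚ) l₂ d₂ (a * ιp) (b * ιm) hl₁'.ne' hl₂'.ne'
  refine ⟨fun w ↦ ?_, hrel₁, hrel₂⟩
  set C := PointedCone.hull ℚ (range ![v₀₁, v₀₂, v₁, v₂])
  have hmem : ∀ i, ![v₀₁, v₀₂, v₁, v₂] i ∈ C := fun i ↦ PointedCone.subset_hull (mem_range_self i)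
  have hcomb : ∀ v ∈ C, (l₁ * l₂ : ℚ) • v + (l₂ : ℚ) • v₁ + (l₁ : ℚ) • v₂ ∈ C := fun v hv ↦
    C.add_mem (C.add_mem (C.smul_mem (by positivity) hv) (C.smul_mem hl₂'.le (hmem 2)))
      (C.smul_mem hl₁'.le (hmem 3))
  have he₃ : ![0, 0, 1] ∈ C.lineal :=
    PointedCone.mem_lineal_of_smul_mem_of_smul_mem (α := a * ιp) (β := b * ιm)
      (by exact_mod_cast mul_pos ha hιp) (by exact_mod_cast mul_neg_of_neg_of_pos hb hιm)
      (hrel₁ ▸ hcomb _ (hmem 0)) (hrel₂ ▸ hcomb _ (hmem 1))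
  have hC : C = ⊤ := PointedCone.eq_top_of_e₃_mem_lineal hl₁' hl₂'
    (hv₀₁ ▸ hmem 0) (hv₁ ▸ hmem 2) (hv₂ ▸ hmem 3) he₃
  obtain ⟨c, hc, hw⟩ := PointedCone.mem_hull_range_iff.mp (hC ▸ Submodule.mem_top : w ∈ C)
  exact ⟨c, hc, by simp [← hw, Fin.sum_univ_four]⟩

theorem stmt_15 (ιp ιm l₁ l₂ d₂ a b : ℤ)
    (hιp : 0 < ιp) (hιm : 0 < ιm) (ha : 0 < a) (hb : b < 0)
    (hl₁ : 2 ≤ l₁) (hl₂ : 2 ≤ l₂) (hd₂ : 0 < d₂) (hd₂' : d₂ < l₂)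
    (hdvd1 : l₂ ∣ (a * ιp - l₁ * d₂)) (hdvd2 : l₁ * l₂ ∣ (a * ιp - b * ιm))
    (v₀₁ v₀₂ v₁ v₂ : Fin 3 → ℚ)
    (hv₀₁ : v₀₁ = ![-1, -1, 0])
    (hv₀₂ : v₀₂ = ![-1, -1, -(((a : ℚ) * ιp - b * ιm) / (l₁ * l₂))])
    (hv₁ : v₁ = ![(l₁ : ℚ), 0, ((a : ℚ) * ιp - l₁ * d₂) / l₂])
    (hv₂ : v₂ = ![0, (l₂ : ℚ), (d₂ : ℚ)]) :
    (∀ w : Fin 3 → ℚ, ∃ c : Fin 4 → ℚ, (∀ i, 0 ≤ c i) ∧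
      w = c 0 • v₀₁ + c 1 • v₀₂ + c 2 • v₁ + c 3 • v₂) ∧
    ((l₁ * l₂ : ℚ) • v₀₁ + (l₂ : ℚ) • v₁ + (l₁ : ℚ) • v₂ = ((a : ℚ) * ιp) • ![0, 0, 1]) ∧
    ((l₁ * l₂ : ℚ) • v₀₂ + (l₂ : ℚ) • v₁ + (l₁ : ℚ) • v₂ = ((b : ℚ) * ιm) • ![0, 0, 1]) :=
  stmt_15_general ιp ιm l₁ l₂ d₂ a b hιp hιm ha hb hl₁ hl₂ v₀₁ v₀₂ v₁ v₂ hv₀₁ hv₀₂ hv₁ hv₂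
end
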